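/- arXiv:2603.27899 — 3 statements merged into one kernel-verified Lean document; each statement's English description precedes it below -/
import Mathlib

section
/- Let G be a monoid and f : G → ℂ bounded. Any two topological Furstenberg systems of f are topologically isomorphic: there is a homeomorphism between them commuting with the G-actions. -/
/-!
A point `x` of a system `(X, T, F)` is coded by its orbit sequence `g ↦ F (T g x)` in `ℂ^G`.
Separation makes the coding injective, so by compactness it is an embedding; it intertwines `T`
with right translation on `ℂ^G`, and it carries the dense orbit of `a` onto the right translates
of `f`. Hence every Furstenberg system of `f` is identified with the closure of the right
translates of `f`, and two systems are identified with each other.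
-/

open Set Topology

theorem Topology.IsEmbedding.exists_homeomorph_comp_eq_of_range_eq {X Y Z : Type*}
    [TopologicalSpace X] [TopologicalSpace Y] [TopologicalSpace Z] {Φ : X → Z} {Ψ : Y → Z}
    (hΦ : IsEmbedding Φ) (hΨ : IsEmbedding Ψ) (hrange : range Φ = range Ψ) :
    ∃ φ : X ≃ₜ Y, ∀ x, Ψ (φ x) = Φ x :=
  ⟨hΦ.toHomeomorph.trans ((Homeomorph.setCongr hrange).trans hΨ.toHomeomorph.symm),
    fun _ => congrArg Subtype.val (hΨ.toHomeomorph.apply_symm_apply _)⟩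

theorem Continuous.range_eq_closure_image_of_dense {X Z : Type*} [TopologicalSpace X]
    [CompactSpace X] [TopologicalSpace Z] [T2Space Z] {Φ : X → Z} (hΦ : Continuous Φ)
    {s : Set X} (hs : Dense s) : range Φ = closure (Φ '' s) := by
  rw [hΦ.isClosedMap.closure_image_eq_of_continuous hΦ, hs.closure_eq, image_univ]

section OrbitCoding

variable {G X Z : Type*}

def orbitCoding (T : G → X → X) (F : X → Z) (x : X) : G → Z := fun g => F (T g x)

variable {T : G → X → X} {F : X → Z}

theorem continuous_orbitCoding [TopologicalSpace X] [TopologicalSpace Z]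
    (hT : ∀ g, Continuous (T g)) (hF : Continuous F) : Continuous (orbitCoding T F) :=
  continuous_pi fun g => hF.comp (hT g)

theorem orbitCoding_injective (hsep : ∀ x y, x ≠ y → ∃ g, F (T g x) ≠ F (T g y)) :
    Function.Injective (orbitCoding T F) := by
  intro x y hxy
  by_contra hne
  obtain ⟨g, hg⟩ := hsep x y hne
  exact hg (congrFun hxy g)

theorem orbitCoding_apply_map [Monoid G] (hTmul : ∀ g h x, T (g * h) x = T g (T h x))
    (g : G) (x : X) : orbitCoding T F (T g x) = fun h => orbitCoding T F x (h * g) := by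
  funext h
  simp only [orbitCoding, hTmul]

theorem range_orbitCoding [Monoid G] [TopologicalSpace X] [CompactSpace X] [TopologicalSpace Z]
    [T2Space Z] (hT : ∀ g, Continuous (T g)) (hF : Continuous F)
    (hTmul : ∀ g h x, T (g * h) x = T g (T h x)) {a : X} (ha : Dense (range fun g => T g a))
    {f : G → Z} (hFa : ∀ g, F (T g a) = f g) :
    range (orbitCoding T F) = closure (range fun g h => f (h * g)) := by
  rw [(continuous_orbitCoding hT hF).range_eq_closure_image_of_dense ha, ← range_comp]
  congr 2
  funext g h
  simp only [Function.comp_apply, orbitCoding, ← hTmul, hFa]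

end OrbitCoding

theorem stmt_5_general {G : Type*} [Monoid G] (f : G → ℂ)
    {X : Type*} [TopologicalSpace X] [CompactSpace X]
    (T : G → X → X) (hTcont : ∀ g, Continuous (T g))
    (hTmul : ∀ g h x, T (g * h) x = T g (T h x))
    (a : X) (ha : Dense (Set.range fun g => T g a))
    (F : X → ℂ) (hFcont : Continuous F) (hFa : ∀ g, F (T g a) = f g)
    (hsep : ∀ x y : X, x ≠ y → ∃ g : G, F (T g x) ≠ F (T g y))
    {Y : Type*} [TopologicalSpace Y] [CompactSpace Y]
    (S : G → Y → Y) (hScont : ∀ g, Continuous (S g))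
    (hSmul : ∀ g h y, S (g * h) y = S g (S h y))
    (b : Y) (hb : Dense (Set.range fun g => S g b))
    (E : Y → ℂ) (hEcont : Continuous E) (hEb : ∀ g, E (S g b) = f g)
    (hsep' : ∀ x y : Y, x ≠ y → ∃ g : G, E (S g x) ≠ E (S g y)) :
    ∃ φ : X ≃ₜ Y, ∀ (g : G) (x : X), φ (T g x) = S g (φ x) := by
  have hF_inj := orbitCoding_injective hsep
  have hE_inj := orbitCoding_injective hsep'
  obtain ⟨φ, hφ⟩ := IsEmbedding.exists_homeomorph_comp_eq_of_range_eq
    ((continuous_orbitCoding hTcont hFcont).isClosedEmbedding hF_inj).isEmbedding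
    ((continuous_orbitCoding hScont hEcont).isClosedEmbedding hE_inj).isEmbedding
    (by rw [range_orbitCoding hTcont hFcont hTmul ha hFa,
      range_orbitCoding hScont hEcont hSmul hb hEb])
  refine ⟨φ, fun g x => hE_inj ?_⟩
  rw [hφ, orbitCoding_apply_map hSmul, hφ, orbitCoding_apply_map hTmul]

/-- Any two topological Furstenberg systems of the same bounded `f : G → ℂ` are
topologically isomorphic via an action-commuting homeomorphism. -/
theorem stmt_5 {G : Type*} [Monoid G] (f : G → ℂ) (hf : Bornology.IsBounded (Set.range f))
    {X : Type*} [TopologicalSpace X] [CompactSpace X] [T2Space X]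
    (T : G → X → X) (hTcont : ∀ g, Continuous (T g))
    (hTmul : ∀ g h x, T (g * h) x = T g (T h x)) (hTone : ∀ x, T 1 x = x)
    (a : X) (ha : Dense (Set.range fun g => T g a))
    (F : X → ℂ) (hFcont : Continuous F) (hFa : ∀ g, F (T g a) = f g)
    (hsep : ∀ x y : X, x ≠ y → ∃ g : G, F (T g x) ≠ F (T g y))
    {Y : Type*} [TopologicalSpace Y] [CompactSpace Y] [T2Space Y]
    (S : G → Y → Y) (hScont : ∀ g, Continuous (S g))
    (hSmul : ∀ g h y, S (g * h) y = S g (S h y)) (hSone : ∀ y, S 1 y = y)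
    (b : Y) (hb : Dense (Set.range fun g => S g b))
    (E : Y → ℂ) (hEcont : Continuous E) (hEb : ∀ g, E (S g b) = f g)
    (hsep' : ∀ x y : Y, x ≠ y → ∃ g : G, E (S g x) ≠ E (S g y)) :
    ∃ φ : X ≃ₜ Y, ∀ (g : G) (x : X), φ (T g x) = S g (φ x) :=
  stmt_5_general f T hTcont hTmul a ha F hFcont hFa hsep S hScont hSmul b hb E hEcont hEb hsep'
end

section
/- Curtis–Hedlund–Lyndon for right-shift systems over a group: Let G be a group, 𝒜 a finite set, and let X, Y ⊆ 𝒜^G be closed subsets invariant under the right shifts (R_g x)(u) = x(ug). If φ : X → Y is a continuous map satisfying φ ∘ R_h = R_h ∘ φ for all h ∈ G, then there exist finitely many g_1, …, g_k ∈ G and a function ψ : 𝒜^k → 𝒜 such that φ(x)(h) = ψ(x(g_1 h), …, x(g_k h)) for all x ∈ X and h ∈ G. -/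
/-!
Restricting to the identity coordinate turns `φ` into a continuous map `X → 𝒜` with discrete
target. On the compact set `X` such a map depends on only finitely many coordinates `g₁, …, gₖ`:
the closed sets of pairs that agree on a finite `S` but have different images form a family
directed by `S` with empty intersection. Shift equivariance transports this local rule from the
identity to every `h ∈ G`.
-/

open Function

section FiniteDependence

variable {ι α β : Type*}

theorem IsCompact.exists_finset_determines_of_continuous [TopologicalSpace α] [T2Space α]
    [TopologicalSpace β] [DiscreteTopology β]
    {X : Set (ι → α)} (hX : IsCompact X) (Φ : X → β) (hΦ : Continuous Φ) :
    ∃ S : Finset ι, ∀ x y : X, (∀ i ∈ S, x.1 i = y.1 i) → Φ x = Φ y := by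
  classical
  have : CompactSpace X := isCompact_iff_compactSpace.mp hX
  let bad : Finset ι → Set (X × X) := fun S =>
    (⋂ i ∈ S, {p | p.1.1 i = p.2.1 i}) ∩ {p | Φ p.1 ≠ Φ p.2}
  have hclosed : ∀ S, IsClosed (bad S) := fun S =>
    (isClosed_biInter fun i _ => isClosed_eq
        ((continuous_apply i).comp (continuous_subtype_val.comp continuous_fst))
        ((continuous_apply i).comp (continuous_subtype_val.comp continuous_snd))).inter
      ((isClosed_discrete {q : β × β | q.1 ≠ q.2}).preimage (hΦ.prodMap hΦ))
  have hdirected : Directed (· ⊇ ·) bad := fun S T =>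
    ⟨S ∪ T, fun p ⟨hp, hne⟩ =>
        ⟨Set.mem_iInter₂.mpr fun i hi => Set.mem_iInter₂.mp hp i (Finset.mem_union_left T hi), hne⟩,
      fun p ⟨hp, hne⟩ =>
        ⟨Set.mem_iInter₂.mpr fun i hi => Set.mem_iInter₂.mp hp i (Finset.mem_union_right S hi), hne⟩⟩
  have hempty : Set.univ ∩ ⋂ S, bad S = ∅ := by
    refine Set.eq_empty_iff_forall_notMem.mpr fun p ⟨_, hp⟩ => ?_
    have hagree : p.1.1 = p.2.1 := funext fun i =>
      Set.mem_iInter₂.mp (Set.mem_iInter.mp hp {i}).1 i (Finset.mem_singleton_self i)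
    exact (Set.mem_iInter.mp hp ∅).2 (congrArg Φ (Subtype.ext hagree))
  obtain ⟨S, hS⟩ := isCompact_univ.elim_directed_family_closed bad hclosed hempty hdirected
  refine ⟨S, fun x y hxy => not_not.mp fun hne => ?_⟩
  exact Set.eq_empty_iff_forall_notMem.mp hS (x, y) ⟨Set.mem_univ _, Set.mem_iInter₂.mpr hxy, hne⟩

theorem exists_fin_rule_of_finset_determines [Nonempty β] {X : Set (ι → α)} (Φ : X → β)
    (S : Finset ι) (hS : ∀ x y : X, (∀ i ∈ S, x.1 i = y.1 i) → Φ x = Φ y) :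
    ∃ ψ : (Fin S.card → α) → β,
      ∀ x : X, Φ x = ψ fun j => x.1 (S.equivFin.symm j) := by
  let r : X → Fin S.card → α := fun x j => x.1 (S.equivFin.symm j)
  have hfactor : Φ.FactorsThrough r := fun x y hxy => hS x y fun i hi => by
    simpa [r] using congrFun hxy (S.equivFin ⟨i, hi⟩)
  exact ⟨extend r Φ fun _ => Classical.arbitrary β, fun x => (hfactor.extend_apply _ x).symm⟩

end FiniteDependence

theorem stmt_12_general {G : Type*} [Group G] {A : Type*} [Finite A]
    [TopologicalSpace A] [DiscreteTopology A]
    (X Y : Set (G → A)) (hXc : IsClosed X)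
    (hXinv : ∀ (u : G) (x : G → A), x ∈ X → (fun v => x (v * u)) ∈ X)
    (φ : {x : G → A // x ∈ X} → {y : G → A // y ∈ Y})
    (hφcont : Continuous φ)
    (hφeq : ∀ (x : G → A) (hx : x ∈ X) (u : G),
      (φ ⟨fun v => x (v * u), hXinv u x hx⟩ : G → A) =
        fun v => (φ ⟨x, hx⟩ : G → A) (v * u)) :
    ∃ (k : ℕ) (g : Fin k → G) (ψ : (Fin k → A) → A),
      ∀ (x : G → A) (hx : x ∈ X) (h : G),
        (φ ⟨x, hx⟩ : G → A) h = ψ (fun i => x (g i * h)) := by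
  obtain hA | hA := isEmpty_or_nonempty A
  · exact ⟨1, fun _ => 1, fun a => a 0, fun x _ _ => isEmptyElim (x 1)⟩
  let Φ : X → A := fun x => (φ x : G → A) 1
  obtain ⟨S, hS⟩ := hXc.isCompact.exists_finset_determines_of_continuous Φ
    ((continuous_apply 1).comp (continuous_subtype_val.comp hφcont))
  obtain ⟨ψ, hψ⟩ := exists_fin_rule_of_finset_determines Φ S hS
  refine ⟨S.card, fun j => S.equivFin.symm j, ψ, fun x hx h => ?_⟩
  calc (φ ⟨x, hx⟩ : G → A) h = Φ ⟨fun v => x (v * h), hXinv h x hx⟩ :=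
      (one_mul h ▸ congrFun (hφeq x hx h) 1).symm
    _ = ψ fun j => x (S.equivFin.symm j * h) := hψ _

/-- Curtis–Hedlund–Lyndon for right-shift systems over a group: a continuous
shift-commuting map between closed shift-invariant subsets of `𝒜^G` is given by a
local code. -/
theorem stmt_12 {G : Type*} [Group G] {A : Type*} [Finite A]
    [TopologicalSpace A] [DiscreteTopology A]
    (X Y : Set (G → A)) (hXc : IsClosed X) (hYc : IsClosed Y)
    (hXinv : ∀ (u : G) (x : G → A), x ∈ X → (fun v => x (v * u)) ∈ X)
    (hYinv : ∀ (u : G) (y : G → A), y ∈ Y → (fun v => y (v * u)) ∈ Y)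
    (φ : {x : G → A // x ∈ X} → {y : G → A // y ∈ Y})
    (hφcont : Continuous φ)
    (hφeq : ∀ (x : G → A) (hx : x ∈ X) (u : G),
      (φ ⟨fun v => x (v * u), hXinv u x hx⟩ : G → A) =
        fun v => (φ ⟨x, hx⟩ : G → A) (v * u)) :
    ∃ (k : ℕ) (g : Fin k → G) (ψ : (Fin k → A) → A),
      ∀ (x : G → A) (hx : x ∈ X) (h : G),
        (φ ⟨x, hx⟩ : G → A) h = ψ (fun i => x (g i * h)) :=
  stmt_12_general X Y hXc hXinv φ hφcont hφeq
end

section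
/- Let G be a monoid, (X, (T_g)) a minimal compact G-system, a ∈ X, and U ⊆ X a non-empty open set such that no g ∈ G satisfies T_g a ∈ closure(U) \ U. Then the indicator point 1_H ∈ {0,1}^G of the set H = {g ∈ G : T_g a ∈ U} is uniformly recurrent for the right shift, and hence its right-shift orbit closure is a minimal system. -/
/-!
Colour each point of `X` by the open cell of the partition `U`, `(closure U)ᶜ` it lies in; the
orbit of `a` never meets the boundary, so `χ g` is the colour of `T g a`. A cylinder around `χ`
prescribes the colours along a finite `F ⊆ G`, which is an open condition `W ∋ a` on `X`. By
minimality and compactness finitely many preimages `(T c)⁻¹' W` cover `X`, so every shift of `χ`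
returns to the cylinder after one of finitely many further shifts. Uniform recurrence of a point
of `A^G` with `A` discrete then makes its orbit closure minimal: cylinders are clopen, so the
finitely many return shifts of a cylinder give a closed set containing the orbit of `χ`.
-/

open Set Function

section Cylinder

variable {G A : Type*} [TopologicalSpace A]

lemma exists_cylinder_subset {V : Set (G → A)} {x : G → A} (hV : IsOpen V) (hx : x ∈ V) :
    ∃ F : Finset G, {y : G → A | ∀ g ∈ F, y g = x g} ⊆ V := by
  obtain ⟨F, u, hu, hsub⟩ := isOpen_pi_iff.mp hV x hx
  refine ⟨F, fun y hy => hsub fun g hg => ?_⟩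
  rw [hy g hg]
  exact (hu g hg).2

lemma isClopen_cylinder [DiscreteTopology A] (F : Finset G) (x : G → A) :
    IsClopen {y : G → A | ∀ g ∈ F, y g = x g} := by
  have h : ∀ g, IsClopen ((fun y : G → A => y g) ⁻¹' {x g}) := fun g =>
    (isClopen_discrete _).preimage (continuous_apply g)
  simp only [ofPred_forall]
  exact isClopen_biInter_finset fun g _ => h g

end Cylinder

section Shift

variable {G A : Type*} [Monoid G]

def rightShift (u : G) (x : G → A) : G → A := fun g => x (g * u)

def shiftOrbit (x : G → A) : Set (G → A) := {y | ∃ u, y = rightShift u x}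

lemma rightShift_rightShift (u v : G) (x : G → A) :
    rightShift u (rightShift v x) = rightShift (u * v) x :=
  funext fun g => by simp only [rightShift, mul_assoc]

lemma mapsTo_rightShift_shiftOrbit (u : G) (x : G → A) :
    MapsTo (rightShift u) (shiftOrbit x) (shiftOrbit x) := by
  rintro _ ⟨v, rfl⟩
  exact ⟨u * v, rightShift_rightShift u v x⟩

variable [TopologicalSpace A]

lemma continuous_rightShift (u : G) : Continuous (rightShift (A := A) u) :=
  continuous_pi fun _ => continuous_apply _

def IsUniformlyRecurrent (x : G → A) : Prop :=
  ∀ V : Set (G → A), IsOpen V → x ∈ V → ∃ c : Finset G, ∀ h, ∃ g ∈ c, rightShift (g * h) x ∈ V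

lemma isUniformlyRecurrent_of_cylinder {x : G → A}
    (hret : ∀ F : Finset G, ∃ c : Finset G, ∀ h, ∃ g ∈ c, ∀ v ∈ F, x (v * (g * h)) = x v) :
    IsUniformlyRecurrent x := by
  intro V hV hxV
  obtain ⟨F, hF⟩ := exists_cylinder_subset hV hxV
  obtain ⟨c, hc⟩ := hret F
  refine ⟨c, fun h => ?_⟩
  obtain ⟨g, hg, hgh⟩ := hc h
  exact ⟨g, hg, hF hgh⟩

variable [DiscreteTopology A]

lemma IsUniformlyRecurrent.mem_closure_shiftOrbit {x y : G → A} (hx : IsUniformlyRecurrent x)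
    (hy : y ∈ closure (shiftOrbit x)) : x ∈ closure (shiftOrbit y) := by
  rw [mem_closure_iff]
  intro V hV hxV
  obtain ⟨F, hF⟩ := exists_cylinder_subset hV hxV
  set C := {z : G → A | ∀ g ∈ F, z g = x g}
  have hC := isClopen_cylinder F x
  obtain ⟨c, hc⟩ := hx C hC.isOpen fun _ _ => rfl
  have hOrbit : shiftOrbit x ⊆ ⋃ g ∈ c, rightShift g ⁻¹' C := by
    rintro _ ⟨h, rfl⟩
    obtain ⟨g, hg, hgh⟩ := hc h
    exact mem_biUnion hg (by rwa [mem_preimage, rightShift_rightShift])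
  have hClosed : IsClosed (⋃ g ∈ c, rightShift g ⁻¹' C) :=
    isClosed_biUnion_finset fun g _ => hC.isClosed.preimage (continuous_rightShift g)
  obtain ⟨g, -, hg⟩ := mem_iUnion₂.mp (closure_minimal hOrbit hClosed hy)
  exact ⟨rightShift g y, hF hg, g, rfl⟩

lemma IsUniformlyRecurrent.closure_shiftOrbit_subset {x y : G → A} (hx : IsUniformlyRecurrent x)
    (hy : y ∈ closure (shiftOrbit x)) : closure (shiftOrbit x) ⊆ closure (shiftOrbit y) := by
  refine closure_minimal ?_ isClosed_closure
  rintro _ ⟨u, rfl⟩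
  exact map_mem_closure (continuous_rightShift u) (hx.mem_closure_shiftOrbit hy)
    (mapsTo_rightShift_shiftOrbit u y)

end Shift

section Minimal

variable {G X : Type*} [TopologicalSpace X] [CompactSpace X]

lemma exists_finset_forall_exists_apply_mem (T : G → X → X)
    (hTcont : ∀ g, Continuous (T g)) (hmin : ∀ x : X, Dense (range fun g => T g x))
    {W : Set X} (hW : IsOpen W) (hWne : W.Nonempty) : ∃ c : Finset G, ∀ x, ∃ g ∈ c, T g x ∈ W := by
  have hcover : univ ⊆ ⋃ g : G, T g ⁻¹' W := fun x _ => by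
    obtain ⟨_, ⟨g, rfl⟩, hg⟩ := (hmin x).exists_mem_open hW hWne
    exact mem_iUnion.mpr ⟨g, hg⟩
  obtain ⟨c, hc⟩ := isCompact_univ.elim_finite_subcover _
    (fun g => (hTcont g).isOpen_preimage W hW) hcover
  exact ⟨c, fun x => by simpa using hc (mem_univ x)⟩

lemma isUniformlyRecurrent_of_forall_apply_mem [Monoid G] {A : Type*} [TopologicalSpace A]
    (T : G → X → X) (hTcont : ∀ g, Continuous (T g))
    (hTmul : ∀ g h x, T (g * h) x = T g (T h x)) (hmin : ∀ x : X, Dense (range fun g => T g x))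
    {S : A → Set X} (hS : ∀ i, IsOpen (S i)) (hSdisj : Pairwise (Disjoint on S))
    (a : X) (χ : G → A) (hχ : ∀ g, T g a ∈ S (χ g)) : IsUniformlyRecurrent χ := by
  refine isUniformlyRecurrent_of_cylinder fun F => ?_
  set W := ⋂ v ∈ F, T v ⁻¹' S (χ v)
  have hW : IsOpen W := isOpen_biInter_finset fun v _ => (hS _).preimage (hTcont v)
  have haW : a ∈ W := mem_iInter₂.mpr fun v _ => hχ v
  obtain ⟨c, hc⟩ := exists_finset_forall_exists_apply_mem T hTcont hmin hW ⟨a, haW⟩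
  refine ⟨c, fun h => ?_⟩
  obtain ⟨g, hg, hgW⟩ := hc (T h a)
  refine ⟨g, hg, fun v hv => hSdisj.eq (not_disjoint_iff.mpr ⟨T (v * (g * h)) a, hχ _, ?_⟩)⟩
  rw [hTmul, hTmul]
  exact mem_iInter₂.mp hgW v hv

end Minimal

theorem stmt_17_general {G : Type*} [Monoid G]
    {X : Type*} [TopologicalSpace X] [CompactSpace X]
    (T : G → X → X) (hTcont : ∀ g, Continuous (T g))
    (hTmul : ∀ g h x, T (g * h) x = T g (T h x))
    (hmin : ∀ x : X, Dense (Set.range fun g => T g x))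
    (a : X) (U : Set X) (hU : IsOpen U)
    (hbad : ∀ g : G, T g a ∉ closure U \ U)
    (χ : G → Bool) (hχ : ∀ g, χ g = true ↔ T g a ∈ U) :
    (∀ V : Set (G → Bool), IsOpen V → χ ∈ V →
      ∃ (k : ℕ) (c : Fin k → G), ∀ h : G, ∃ i, (fun u => χ (u * (c i * h))) ∈ V) ∧
    (∀ y ∈ closure {x : G → Bool | ∃ u : G, x = fun g => χ (g * u)},
      closure {x : G → Bool | ∃ u : G, x = fun g => χ (g * u)} ⊆
        closure {x : G → Bool | ∃ u : G, x = fun g => y (g * u)}) := by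
  set S : Bool → Set X := fun b => if b then U else (closure U)ᶜ
  have hS : ∀ b, IsOpen (S b) := fun b => by
    cases b
    exacts [isClosed_closure.isOpen_compl, hU]
  have hSdisj : Pairwise (Disjoint on S) := by
    have : Disjoint U (closure U)ᶜ := disjoint_compl_right_iff_subset.mpr subset_closure
    rintro (_ | _) (_ | _) hne
    exacts [absurd rfl hne, this.symm, this, absurd rfl hne]
  have haS : ∀ g, T g a ∈ S (χ g) := fun g => by
    cases h : χ g
    · exact fun hcl => hbad g ⟨hcl, fun hmem => by simp [(hχ g).mpr hmem] at h⟩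
    · exact (hχ g).mp h
  have hrec := isUniformlyRecurrent_of_forall_apply_mem T hTcont hTmul hmin hS hSdisj a χ haS
  refine ⟨fun V hV hχV => ?_, fun y => hrec.closure_shiftOrbit_subset⟩
  obtain ⟨c, hc⟩ := hrec V hV hχV
  refine ⟨c.toList.length, c.toList.get, fun h => ?_⟩
  obtain ⟨g, hg, hgh⟩ := hc h
  obtain ⟨i, rfl⟩ := List.mem_iff_get.mp (Finset.mem_toList.mpr hg)
  exact ⟨i, hgh⟩

/-- If `(X,(T_g))` is minimal, `U` open non-empty, and no point `T_g a` lies in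
`closure U \ U`, then the indicator of `H = {g : T_g a ∈ U}` is uniformly recurrent for
the right shift on `{0,1}^G`, and its orbit closure is a minimal system. -/
theorem stmt_17 {G : Type*} [Monoid G]
    {X : Type*} [TopologicalSpace X] [CompactSpace X] [T2Space X] [Nonempty X]
    (T : G → X → X) (hTcont : ∀ g, Continuous (T g))
    (hTmul : ∀ g h x, T (g * h) x = T g (T h x)) (hTone : ∀ x, T 1 x = x)
    (hmin : ∀ x : X, Dense (Set.range fun g => T g x))
    (a : X) (U : Set X) (hU : IsOpen U) (hUne : U.Nonempty)
    (hbad : ∀ g : G, T g a ∉ closure U \ U)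
    (χ : G → Bool) (hχ : ∀ g, χ g = true ↔ T g a ∈ U) :
    (∀ V : Set (G → Bool), IsOpen V → χ ∈ V →
      ∃ (k : ℕ) (c : Fin k → G), ∀ h : G, ∃ i, (fun u => χ (u * (c i * h))) ∈ V) ∧
    (∀ y ∈ closure {x : G → Bool | ∃ u : G, x = fun g => χ (g * u)},
      closure {x : G → Bool | ∃ u : G, x = fun g => χ (g * u)} ⊆
        closure {x : G → Bool | ∃ u : G, x = fun g => y (g * u)}) :=
  stmt_17_general T hTcont hTmul hmin a U hU hbad χ hχ
end
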